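/- arXiv:1107.5926 — 5 statements merged into one kernel-verified Lean document; each statement's English description precedes it below -/
import Mathlib

section
/- For λ > 0 and n ≥ 2, the function f_L(t) = λ e^{-λt}(1 - (1 - e^{-λt})^{n-2}(1 - n e^{-λt})) for t ≥ 0 is a probability density function, i.e. it is nonnegative and integrates to 1 over [0, ∞). -/
open Real MeasureTheory

theorem root_edge_density_is_pdf (lam : ℝ) (hlam : 0 < lam) (n : ℕ) (hn : 2 ≤ n) :
    (∀ t : ℝ, 0 ≤ t →
      0 ≤ lam * Real.exp (-lam * t) *
        (1 - (1 - Real.exp (-lam * t)) ^ (n - 2) * (1 - n * Real.exp (-lam * t)))) ∧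
    (∫ t in Set.Ioi (0 : ℝ), lam * Real.exp (-lam * t) *
        (1 - (1 - Real.exp (-lam * t)) ^ (n - 2) * (1 - n * Real.exp (-lam * t)))) = 1 := by
  obtain ⟨k, rfl⟩ : ∃ k, n = k + 2 := ⟨n - 2, by omega⟩
  have hsub : k + 2 - 2 = k := by omega
  rw [hsub]
  push_cast
  have hupos : ∀ t : ℝ, (0:ℝ) < Real.exp (-lam * t) := fun t => Real.exp_pos _
  have hule : ∀ t : ℝ, 0 ≤ t → Real.exp (-lam * t) ≤ 1 := by
    intro t ht
    rw [Real.exp_le_one_iff]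
    nlinarith
  constructor
  · intro t ht
    set u := Real.exp (-lam * t) with hu
    have hu0 : (0:ℝ) < u := hupos t
    have hu1 : u ≤ 1 := hule t ht
    have hp0 : (0:ℝ) ≤ (1 - u) ^ k := pow_nonneg (by linarith) k
    have hp1 : (1 - u) ^ k ≤ 1 := pow_le_one₀ (by linarith) (by linarith)
    have hq1 : 1 - ((k:ℝ) + 2) * u ≤ 1 := by nlinarith
    have hpq : (1 - u) ^ k * (1 - ((k:ℝ) + 2) * u) ≤ 1 := by
      calc (1 - u) ^ k * (1 - ((k:ℝ) + 2) * u) ≤ (1 - u) ^ k * 1 :=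
            mul_le_mul_of_nonneg_left hq1 hp0
        _ ≤ 1 := by rw [mul_one]; exact hp1
    have := mul_nonneg (mul_nonneg hlam.le hu0.le) (by linarith : (0:ℝ) ≤ 1 - (1 - u) ^ k * (1 - ((k:ℝ) + 2) * u))
    linarith
  · -- antiderivative
    set G : ℝ → ℝ := fun t => -Real.exp (-lam * t) + Real.exp (-lam * t) * (1 - Real.exp (-lam * t)) ^ (k + 1) with hG
    have hderiv : ∀ t : ℝ, HasDerivAt G
        (lam * Real.exp (-lam * t) *
          (1 - (1 - Real.exp (-lam * t)) ^ k * (1 - ((k:ℝ) + 2) * Real.exp (-lam * t)))) t := by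
      intro t
      have h1 : HasDerivAt (fun t : ℝ => -lam * t) (-lam) t := by
        simpa using (hasDerivAt_id t).const_mul (-lam)
      have he : HasDerivAt (fun t => Real.exp (-lam * t)) (Real.exp (-lam * t) * (-lam)) t := h1.exp
      have h2 : HasDerivAt (fun t => (1 - Real.exp (-lam * t)) ^ (k + 1))
          (((k:ℝ) + 1) * (1 - Real.exp (-lam * t)) ^ k * (-(Real.exp (-lam * t) * (-lam)))) t := by
        have := ((hasDerivAt_const t (1:ℝ)).fun_sub he).fun_pow (k + 1)
        simpa using this
      have h3 := he.fun_mul h2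
      have h4 := he.fun_neg.fun_add h3
      exact h4.congr_deriv (by ring)
    have hlamtop : Filter.Tendsto (fun t : ℝ => lam * t) Filter.atTop Filter.atTop :=
      Filter.Tendsto.const_mul_atTop hlam Filter.tendsto_id
    have hexp0 : Filter.Tendsto (fun t : ℝ => Real.exp (-lam * t)) Filter.atTop (nhds 0) :=
      (Real.tendsto_exp_neg_atTop_nhds_zero.comp hlamtop).congr (fun t => by simp [neg_mul])
    have hGtop : Filter.Tendsto G Filter.atTop (nhds 0) := by
      rw [hG]
      have h2 := hexp0.neg.add (hexp0.mul (((tendsto_const_nhds (x := (1:ℝ))).sub hexp0).pow (k + 1)))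
      simpa using h2
    have hGcont : ContinuousWithinAt G (Set.Ici 0) 0 := by
      apply Continuous.continuousWithinAt
      fun_prop
    have hint : IntegrableOn (fun t => lam * Real.exp (-lam * t) *
        (1 - (1 - Real.exp (-lam * t)) ^ k * (1 - ((k:ℝ) + 2) * Real.exp (-lam * t)))) (Set.Ioi 0) := by
      apply Integrable.mono' (((exp_neg_integrableOn_Ioi 0 hlam)).const_mul (lam * ((k:ℝ) + 4)))
      · exact Continuous.aestronglyMeasurable (by fun_prop)
      · filter_upwards [ae_restrict_mem measurableSet_Ioi] with t ht
        have hu0 : (0:ℝ) < Real.exp (-lam * t) := hupos t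
        have hu1 : Real.exp (-lam * t) ≤ 1 := hule t (le_of_lt ht)
        set u := Real.exp (-lam * t) with hu
        have hp0 : (0:ℝ) ≤ (1 - u) ^ k := pow_nonneg (by linarith) k
        have hp1 : (1 - u) ^ k ≤ 1 := pow_le_one₀ (by linarith) (by linarith)
        have hub : (1 - u) ^ k * (1 - ((k:ℝ) + 2) * u) ≤ 1 := by
          calc (1 - u) ^ k * (1 - ((k:ℝ) + 2) * u) ≤ (1 - u) ^ k * 1 :=
                mul_le_mul_of_nonneg_left (by nlinarith) hp0
            _ ≤ 1 := by rw [mul_one]; exact hp1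
        have hlb : -((k:ℝ) + 1) ≤ (1 - u) ^ k * (1 - ((k:ℝ) + 2) * u) := by
          have h1 : (1 - u) ^ k * (-((k:ℝ) + 1)) ≤ (1 - u) ^ k * (1 - ((k:ℝ) + 2) * u) :=
            mul_le_mul_of_nonneg_left (by nlinarith) hp0
          nlinarith
        have habs : |1 - (1 - u) ^ k * (1 - ((k:ℝ) + 2) * u)| ≤ (k:ℝ) + 4 := by
          rw [abs_le]; constructor <;> nlinarith
        rw [Real.norm_eq_abs, abs_mul, abs_of_nonneg (mul_nonneg hlam.le hu0.le)]
        calc lam * u * |1 - (1 - u) ^ k * (1 - ((k:ℝ) + 2) * u)|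
            ≤ lam * u * ((k:ℝ) + 4) :=
              mul_le_mul_of_nonneg_left habs (mul_nonneg hlam.le hu0.le)
          _ = lam * ((k:ℝ) + 4) * Real.exp (-lam * t) := by rw [hu]; ring
    have key := integral_Ioi_of_hasDerivAt_of_tendsto hGcont (fun t _ => hderiv t) hint hGtop
    rw [key]
    have : G 0 = -1 := by
      simp [hG, Real.exp_zero]
    rw [this]
    norm_num
end

section
/- For λ > 0 and n ≥ 2, ∫₀^∞ t · λ e^{-λt}(1 - (1 - e^{-λt})^{n-2}(1 - n e^{-λt})) dt = (1/λ)(1 - 1/n). -/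
open Real MeasureTheory

theorem root_edge_expected_length (lam : ℝ) (hlam : 0 < lam) (n : ℕ) (hn : 2 ≤ n) :
    (∫ t in Set.Ioi (0 : ℝ), t * (lam * Real.exp (-lam * t) *
        (1 - (1 - Real.exp (-lam * t)) ^ (n - 2) * (1 - n * Real.exp (-lam * t)))))
      = (1 / lam) * (1 - 1 / n) := by
  obtain ⟨m, rfl⟩ : ∃ m, n = m + 2 := ⟨n - 2, by omega⟩
  have hm2 : (m + 2) - 2 = m := by omega
  set E : ℝ → ℝ := fun t => Real.exp (-lam * t) with hEdef
  set g : ℝ → ℝ := fun t =>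
    -(t * E t * (1 - (1 - E t) ^ (m + 1))) - E t / lam - (1 - E t) ^ (m + 2) / (lam * ((m:ℝ) + 2))
    with hgdef
  have hE : ∀ t : ℝ, HasDerivAt E (-lam * E t) t := by
    intro t
    have h1 : HasDerivAt (fun t : ℝ => -lam * t) (-lam) t := by
      simpa using (hasDerivAt_id t).const_mul (-lam)
    simpa [hEdef, mul_comm] using h1.exp
  have hEpos : ∀ t : ℝ, 0 < E t := fun t => Real.exp_pos _
  have hderiv : ∀ t ∈ Set.Ici (0:ℝ), HasDerivAt g
      (t * (lam * E t * (1 - (1 - E t) ^ m * (1 - ((m:ℝ) + 2) * E t)))) t := by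
    intro t _
    have h1 : HasDerivAt (fun t => (1 - E t) ^ (m + 1))
        (((m:ℝ) + 1) * (1 - E t) ^ m * (-(-lam * E t))) t := by
      have := ((hE t).const_sub 1).fun_pow (m + 1)
      simpa [Nat.cast_add] using this
    have h2 : HasDerivAt (fun t => (1 - E t) ^ (m + 2))
        (((m:ℝ) + 2) * (1 - E t) ^ (m + 1) * (-(-lam * E t))) t := by
      have := ((hE t).const_sub 1).fun_pow (m + 2)
      simpa [Nat.cast_add] using this
    have h3 : HasDerivAt (fun t => t * E t * (1 - (1 - E t) ^ (m + 1)))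
        ((1 * E t + t * (-lam * E t)) * (1 - (1 - E t) ^ (m + 1))
          + t * E t * (-(((m:ℝ) + 1) * (1 - E t) ^ m * (-(-lam * E t))))) t :=
      ((hasDerivAt_id t).mul (hE t)).mul (h1.const_sub 1)
    have h4 := (h3.neg.sub ((hE t).div_const lam)).sub (h2.div_const (lam * ((m:ℝ) + 2)))
    convert (show HasDerivAt g _ t from h4) using 1
    have hlam' : lam ≠ 0 := ne_of_gt hlam
    have hm' : ((m:ℝ) + 2) ≠ 0 := by positivity
    field_simp
    ring
  have hnonneg : ∀ t ∈ Set.Ioi (0:ℝ),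
      0 ≤ t * (lam * E t * (1 - (1 - E t) ^ m * (1 - ((m:ℝ) + 2) * E t))) := by
    intro t ht
    have ht' : (0:ℝ) < t := ht
    have hE1 : E t < 1 := Real.exp_lt_one_iff.mpr (by nlinarith)
    have hEp := hEpos t
    have hp0 : (0:ℝ) ≤ (1 - E t) ^ m := pow_nonneg (by linarith) m
    have hp1 : (1 - E t) ^ m ≤ 1 := pow_le_one₀ (by linarith) (by linarith)
    have hmn : (0:ℝ) ≤ (m:ℝ) := Nat.cast_nonneg m
    have key : (1 - E t) ^ m * (1 - ((m:ℝ) + 2) * E t) ≤ 1 := by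
      rcases le_or_gt (1 - ((m:ℝ) + 2) * E t) 0 with h | h
      · nlinarith
      · nlinarith
    have h5 : (0:ℝ) ≤ lam * E t * (1 - (1 - E t) ^ m * (1 - ((m:ℝ) + 2) * E t)) := by
      apply mul_nonneg (by positivity)
      linarith
    exact mul_nonneg ht'.le h5
  have hEtop : Filter.Tendsto E Filter.atTop (nhds 0) := by
    rw [hEdef]
    exact Real.tendsto_exp_comp_nhds_zero.mpr
      (Filter.Tendsto.const_mul_atTop_of_neg (by linarith) Filter.tendsto_id)
  have htE : Filter.Tendsto (fun t => t * E t) Filter.atTop (nhds 0) := by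
    have h := tendsto_rpow_mul_exp_neg_mul_atTop_nhds_zero 1 lam hlam
    refine h.congr' ?_
    filter_upwards [Filter.eventually_ge_atTop (0:ℝ)] with x hx
    rw [Real.rpow_one]
  have h1m : Filter.Tendsto (fun t => (1:ℝ) - E t) Filter.atTop (nhds 1) := by
    simpa using hEtop.const_sub 1
  have hgtop : Filter.Tendsto g Filter.atTop (nhds (-(1 / (lam * ((m:ℝ) + 2))))) := by
    have hfull := (((htE.mul ((h1m.pow (m+1)).const_sub 1)).neg).sub
      (hEtop.div_const lam)).sub ((h1m.pow (m+2)).div_const (lam * ((m:ℝ) + 2)))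
    norm_num at hfull
    have heq : -(1 / (lam * ((m:ℝ) + 2))) = -(((m:ℝ) + 2)⁻¹ * lam⁻¹) := by
      rw [one_div, mul_inv, mul_comm]
    rw [heq]
    exact hfull
  have key := MeasureTheory.integral_Ioi_of_hasDerivAt_of_nonneg' hderiv hnonneg hgtop
  have hg0 : g 0 = -(1 / lam) := by
    simp [hgdef, hEdef]
  have hcast : ((m + 2 : ℕ) : ℝ) = (m:ℝ) + 2 := by push_cast; ring
  calc (∫ t in Set.Ioi (0 : ℝ), t * (lam * Real.exp (-lam * t) *
        (1 - (1 - Real.exp (-lam * t)) ^ ((m+2) - 2) * (1 - ((m+2:ℕ):ℝ) * Real.exp (-lam * t)))))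
      = ∫ t in Set.Ioi (0:ℝ), t * (lam * E t * (1 - (1 - E t) ^ m * (1 - ((m:ℝ) + 2) * E t))) := by
        rw [hm2]; push_cast; rfl
    _ = -(1 / (lam * ((m:ℝ) + 2))) - g 0 := key
    _ = (1 / lam) * (1 - 1 / ((m + 2 : ℕ) : ℝ)) := by
        rw [hg0, hcast]
        have hlam' : lam ≠ 0 := ne_of_gt hlam
        have hm' : ((m:ℝ) + 2) ≠ 0 := by positivity
        field_simp
        ring
end

section
/- For i.i.d. exponential random variables analysis: if I_k = ∑_{i=2}^k X_i with X_i independent exponential of rate iλ, then the density of I_k is f_{I_k}(t) = k(k-1) ∑_{i=2}^k λ(-e^{-λt})^i C(k-2, i-2). -/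
open MeasureTheory ProbabilityTheory Finset Real
open scoped ENNReal


noncomputable def Fd (lam : ℝ) (n : ℕ) (t : ℝ) : ℝ :=
  if 0 ≤ t then ((n:ℝ)+2) * ((n:ℝ)+1) * lam * Real.exp (-(2*lam)*t) * (1 - Real.exp (-lam*t))^n
  else 0

lemma exp_le_one_of {lam t : ℝ} (hlam : 0 < lam) (ht : 0 ≤ t) : exp (-lam*t) ≤ 1 := by
  rw [Real.exp_le_one_iff]; nlinarith

lemma hasDerivAt_G {lam : ℝ} (hlam : 0 < lam) (n : ℕ) (x : ℝ) :
    HasDerivAt (fun s => exp (((n:ℝ)+1)*lam*s) * (1 - exp (-lam*s))^(n+1) / (((n:ℝ)+1)*lam))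
      (exp (((n:ℝ)+1)*lam*x) * (1 - exp (-lam*x))^n) x := by
  have hc : ((n:ℝ)+1)*lam ≠ 0 := by positivity
  have h1 : HasDerivAt (fun s : ℝ => exp (((n:ℝ)+1)*lam*s))
      (exp (((n:ℝ)+1)*lam*x) * (((n:ℝ)+1)*lam)) x := by
    simpa using ((hasDerivAt_id x).const_mul (((n:ℝ)+1)*lam)).exp
  have h2 : HasDerivAt (fun s : ℝ => 1 - exp (-lam*s)) (exp (-lam*x) * lam) x := by
    have h := (((hasDerivAt_id x).const_mul (-lam)).exp).const_sub 1
    simpa using h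
  have h3 := h2.pow (n+1)
  have h4 := (h1.mul h3).div_const (((n:ℝ)+1)*lam)
  refine h4.congr_deriv ?_
  symm
  have hps : (1 - exp (-lam*x))^(n+1) = (1 - exp (-lam*x))^n * (1 - exp (-lam*x)) := pow_succ _ _
  rw [eq_div_iff hc]
  simp only [Nat.add_sub_cancel, Nat.cast_add, Nat.cast_one]
  simp only [Pi.pow_apply]; rw [hps]
  ring

lemma integral_G {lam : ℝ} (hlam : 0 < lam) (n : ℕ) (t : ℝ) :
    ∫ x in (0:ℝ)..t, exp (((n:ℝ)+1)*lam*x) * (1 - exp (-lam*x))^n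
      = exp (((n:ℝ)+1)*lam*t) * (1 - exp (-lam*t))^(n+1) / (((n:ℝ)+1)*lam) := by
  have h := intervalIntegral.integral_eq_sub_of_hasDerivAt
    (f := fun s => exp (((n:ℝ)+1)*lam*s) * (1 - exp (-lam*s))^(n+1) / (((n:ℝ)+1)*lam))
    (fun x _ => hasDerivAt_G hlam n x)
    (Continuous.intervalIntegrable (by continuity) 0 t)
  rw [h]
  simp

lemma Fd_measurable (lam : ℝ) (n : ℕ) :
    Measurable fun t => ENNReal.ofReal (Fd lam n t) := by
  apply Measurable.ennreal_ofReal
  unfold Fd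
  exact Measurable.ite (measurableSet_le measurable_const measurable_id)
    (by fun_prop) measurable_const

lemma expMeasure_eq (r : ℝ) : expMeasure r = volume.withDensity (exponentialPDF r) := rfl

lemma map_add_prod_withDensity (f g : ℝ → ℝ≥0∞) (hf : Measurable f) (hg : Measurable g) :
    ((volume.withDensity f).prod (volume.withDensity g)).map (fun p : ℝ × ℝ => p.1 + p.2)
      = volume.withDensity (fun t => ∫⁻ x, f x * g (t - x)) := by
  ext A hA
  rw [Measure.map_apply measurable_add hA, withDensity_apply _ hA]
  have hpre : MeasurableSet ((fun p : ℝ × ℝ => p.1 + p.2) ⁻¹' A) := measurable_add hA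
  have hindA : Measurable (A.indicator (1 : ℝ → ℝ≥0∞)) := measurable_one.indicator hA
  have hmeas1 : Measurable fun p : ℝ × ℝ => A.indicator (1 : ℝ → ℝ≥0∞) (p.1 + p.2) :=
    hindA.comp measurable_add
  rw [← lintegral_indicator_one hpre]
  have hindeq : ((fun p : ℝ × ℝ => p.1 + p.2) ⁻¹' A).indicator (1 : ℝ × ℝ → ℝ≥0∞)
      = fun p : ℝ × ℝ => A.indicator (1 : ℝ → ℝ≥0∞) (p.1 + p.2) := rfl
  rw [hindeq]
  rw [lintegral_prod _ hmeas1.aemeasurable]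
  have hinner : ∀ x : ℝ, (∫⁻ y, A.indicator (1 : ℝ → ℝ≥0∞) (x + y) ∂(volume.withDensity g))
      = ∫⁻ t, g (t - x) * A.indicator 1 t ∂volume := by
    intro x
    have hm : Measurable fun y : ℝ => A.indicator (1 : ℝ → ℝ≥0∞) (x + y) :=
      hindA.comp (measurable_const_add x)
    rw [lintegral_withDensity_eq_lintegral_mul _ hg hm]
    have h2 := lintegral_add_left_eq_self (μ := (volume : Measure ℝ))
      (fun t => g (t - x) * A.indicator 1 t) x
    rw [← h2]
    congr 1 with y
    simp
  have hmU : Measurable fun p : ℝ × ℝ => g (p.2 - p.1) * A.indicator (1 : ℝ → ℝ≥0∞) p.2 :=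
    (hg.comp (measurable_snd.sub measurable_fst)).mul (hindA.comp measurable_snd)
  have hm2 : Measurable fun x : ℝ => ∫⁻ t, g (t - x) * A.indicator (1 : ℝ → ℝ≥0∞) t :=
    Measurable.lintegral_prod_right (f := fun x t => g (t - x) * A.indicator 1 t) hmU
  calc ∫⁻ x, (∫⁻ y, A.indicator (1:ℝ→ℝ≥0∞) (x + y) ∂(volume.withDensity g)) ∂(volume.withDensity f)
      = ∫⁻ x, f x * ∫⁻ t, g (t - x) * A.indicator 1 t ∂volume ∂volume := by
        have hm3 : Measurable fun x : ℝ =>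
            ∫⁻ y, A.indicator (1:ℝ→ℝ≥0∞) (x + y) ∂(volume.withDensity g) := by
          simp only [hinner]; exact hm2
        rw [lintegral_withDensity_eq_lintegral_mul _ hf hm3]
        simp only [Pi.mul_apply, hinner]
    _ = ∫⁻ x, ∫⁻ t, f x * (g (t - x) * A.indicator 1 t) ∂volume ∂volume := by
        congr 1 with x
        have hmx : Measurable fun t : ℝ => g (t - x) * A.indicator (1:ℝ→ℝ≥0∞) t :=
          (hg.comp (measurable_id.sub measurable_const)).mul hindA
        rw [lintegral_const_mul (f x) hmx]
    _ = ∫⁻ t, ∫⁻ x, f x * (g (t - x) * A.indicator 1 t) ∂volume ∂volume := by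
        rw [lintegral_lintegral_swap]
        exact ((hf.comp measurable_fst).mul
          ((hg.comp (measurable_snd.sub measurable_fst)).mul (hindA.comp measurable_snd))).aemeasurable
    _ = ∫⁻ t in A, ∫⁻ x, f x * g (t - x) ∂volume ∂volume := by
        rw [← lintegral_indicator hA]
        congr 1 with t
        by_cases ht : t ∈ A
        · simp only [Set.indicator_of_mem ht, Pi.one_apply, mul_one]
        · simp [Set.indicator_of_notMem ht]

lemma conv_density {lam : ℝ} (hlam : 0 < lam) (n : ℕ) (t : ℝ) :
    (∫⁻ x, ENNReal.ofReal (Fd lam n x) * exponentialPDF (lam * ((n:ℝ)+3)) (t - x))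
      = ENNReal.ofReal (Fd lam (n+1) t) := by
  set r : ℝ := lam * ((n:ℝ)+3) with hr
  have hrpos : 0 < r := by positivity
  by_cases ht : 0 ≤ t
  case neg =>
    have hz : ∀ x : ℝ, ENNReal.ofReal (Fd lam n x) * exponentialPDF r (t - x) = 0 := by
      intro x
      by_cases hx : 0 ≤ x
      · rw [exponentialPDF_of_neg (by linarith), mul_zero]
      · rw [Fd, if_neg hx, ENNReal.ofReal_zero, zero_mul]
    rw [lintegral_congr hz, lintegral_zero, Fd, if_neg ht, ENNReal.ofReal_zero]
  case pos =>
  set H : ℝ → ℝ := fun x =>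
    (((n:ℝ)+2)*((n:ℝ)+1)*lam * exp (-(2*lam)*x) * (1 - exp (-lam*x))^n) * (r * exp (-(r*(t-x))))
    with hH
  have hHnonneg : ∀ x ∈ Set.Icc (0:ℝ) t, 0 ≤ H x := by
    intro x hx
    have h1 : 0 ≤ 1 - exp (-lam*x) := by linarith [exp_le_one_of hlam hx.1]
    have : (0:ℝ) ≤ ((n:ℝ)+2)*((n:ℝ)+1)*lam := by positivity
    positivity
  have hpt : ∀ x : ℝ, ENNReal.ofReal (Fd lam n x) * exponentialPDF r (t - x)
      = ENNReal.ofReal ((Set.Icc (0:ℝ) t).indicator H x) := by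
    intro x
    by_cases hx : x ∈ Set.Icc (0:ℝ) t
    · rw [Set.indicator_of_mem hx, Fd, if_pos hx.1,
        exponentialPDF_of_nonneg (by linarith [hx.2]), hH, ← ENNReal.ofReal_mul]
      have h1 : 0 ≤ 1 - exp (-lam*x) := by linarith [exp_le_one_of hlam hx.1]
      positivity
    · rw [Set.indicator_of_notMem hx, ENNReal.ofReal_zero]
      rw [Set.mem_Icc, not_and_or] at hx
      by_cases hx0 : 0 ≤ x
      · have hxt : t - x < 0 := by
          rcases hx with h | h
          · exact absurd hx0 h
          · push_neg at h; linarith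
        rw [exponentialPDF_of_neg hxt, mul_zero]
      · rw [Fd, if_neg hx0, ENNReal.ofReal_zero, zero_mul]
  rw [lintegral_congr hpt]
  have hHcont : Continuous H := by fun_prop
  have hint : Integrable ((Set.Icc (0:ℝ) t).indicator H) :=
    (hHcont.integrableOn_Icc).integrable_indicator measurableSet_Icc
  rw [← ofReal_integral_eq_lintegral_ofReal hint
    (Filter.Eventually.of_forall (Set.indicator_nonneg hHnonneg))]
  congr 1
  rw [MeasureTheory.integral_indicator measurableSet_Icc, integral_Icc_eq_integral_Ioc,
    ← intervalIntegral.integral_of_le ht]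
  have hHeq : ∀ x : ℝ, H x = (((n:ℝ)+2)*((n:ℝ)+1)*lam * r * exp (-(r*t)))
      * (exp (((n:ℝ)+1)*lam*x) * (1 - exp (-lam*x))^n) := by
    intro x
    have hx2 : exp (-(2*lam)*x) * exp (-(r*(t-x))) = exp (-(r*t)) * exp (((n:ℝ)+1)*lam*x) := by
      rw [← Real.exp_add, ← Real.exp_add]; congr 1; rw [hr]; ring
    calc H x = (((n:ℝ)+2)*((n:ℝ)+1)*lam * r) * (exp (-(2*lam)*x) * exp (-(r*(t-x))))
          * (1 - exp (-lam*x))^n := by rw [hH]; ring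
    _ = _ := by rw [hx2]; ring
  simp only [hHeq]
  rw [intervalIntegral.integral_const_mul, integral_G hlam n t]
  have hx3 : exp (-(r*t)) * exp (((n:ℝ)+1)*lam*t) = exp (-(2*lam*t)) := by
    rw [← Real.exp_add]; congr 1; rw [hr]; ring
  rw [Fd, if_pos ht]
  push_cast
  have hc : ((n:ℝ)+1)*lam ≠ 0 := by positivity
  field_simp
  linear_combination (((n:ℝ)+2)*r*(1 - rexp (-(lam*t)))^(n+1)) * hx3
    + (((n:ℝ)+2)*rexp (-(2*lam*t))*(1 - rexp (-(lam*t)))^(n+1)) * hr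

lemma aux_main {Ω : Type*} [MeasurableSpace Ω] (P : Measure Ω) [IsProbabilityMeasure P]
    {lam : ℝ} (hlam : 0 < lam) (n : ℕ)
    (X : ℕ → Ω → ℝ) (hmeas : ∀ i, Measurable (X i))
    (hindep : iIndepFun X P)
    (hdist : ∀ i ∈ Finset.Icc 2 (n+2), Measure.map (X i) P = expMeasure (lam * i)) :
    Measure.map (fun ω => ∑ i ∈ Finset.Icc 2 (n+2), X i ω) P
      = volume.withDensity (fun t => ENNReal.ofReal (Fd lam n t)) := by
  induction n with
  | zero =>
    have h2 : Finset.Icc 2 2 = {2} := Finset.Icc_self 2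
    simp only [h2, Finset.sum_singleton]
    rw [hdist 2 (by simp), expMeasure_eq]
    congr 1 with t
    rw [exponentialPDF_eq, Fd]
    congr 1
    split_ifs with ht
    · push_cast; ring_nf
    · rfl
  | succ n ih =>
    have hS : Finset.Icc 2 (n+3) = insert (n+3) (Finset.Icc 2 (n+2)) := by
      ext i; simp [Finset.mem_Icc, Finset.mem_insert]; omega
    have hnm : (n+3) ∉ Finset.Icc 2 (n+2) := by simp
    have hsum : (fun ω => ∑ i ∈ Finset.Icc 2 (n+3), X i ω)
        = fun ω => (∑ i ∈ Finset.Icc 2 (n+2), X i ω) + X (n+3) ω := by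
      funext ω
      rw [hS, Finset.sum_insert hnm]
      ring
    have hSm : Measurable fun ω => ∑ i ∈ Finset.Icc 2 (n+2), X i ω :=
      Finset.measurable_sum _ (fun i _ => hmeas i)
    have hIndep2 : IndepFun (fun ω => ∑ i ∈ Finset.Icc 2 (n+2), X i ω) (X (n+3)) P := by
      have h := hindep.indepFun_finsetSum_of_notMem hmeas hnm
      have he : (∑ j ∈ Finset.Icc 2 (n+2), X j) = fun ω => ∑ i ∈ Finset.Icc 2 (n+2), X i ω := by
        funext ω; rw [Finset.sum_apply]
      rwa [he] at h
    have hmap : Measure.map (fun ω => (∑ i ∈ Finset.Icc 2 (n+2), X i ω) + X (n+3) ω) P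
        = ((Measure.map (fun ω => ∑ i ∈ Finset.Icc 2 (n+2), X i ω) P).prod
            (Measure.map (X (n+3)) P)).map (fun p : ℝ × ℝ => p.1 + p.2) := by
      rw [← (indepFun_iff_map_prod_eq_prod_map_map hSm.aemeasurable
        (hmeas _).aemeasurable).mp hIndep2]
      rw [Measure.map_map measurable_add (hSm.prodMk (hmeas _))]
      rfl
    have hih := ih (fun i hi => hdist i (by rw [hS]; exact Finset.mem_insert_of_mem hi))
    rw [hsum, hmap, hih, hdist (n+3) (by simp [hS]), expMeasure_eq]
    have hg : Measurable (exponentialPDF (lam * ((n+3:ℕ):ℝ))) :=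
      (measurable_exponentialPDFReal _).ennreal_ofReal
    rw [map_add_prod_withDensity _ _ (Fd_measurable lam n) hg]
    congr 1 with t
    have : lam * ((n+3 : ℕ) : ℝ) = lam * ((n:ℝ)+3) := by push_cast; ring
    rw [this]
    exact conv_density hlam n t

lemma Fd_eq_sum (lam : ℝ) (n : ℕ) (t : ℝ) :
    (if 0 ≤ t then ((n+2:ℕ):ℝ) * (((n+2:ℕ):ℝ) - 1) *
        ∑ i ∈ Finset.Icc 2 (n+2), lam * (-Real.exp (-lam * t)) ^ i *
          ((n+2-2).choose (i-2) : ℝ)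
      else 0) = Fd lam n t := by
  unfold Fd
  split_ifs with ht
  swap
  · rfl
  set u := Real.exp (-lam * t) with hu
  have hsum : ∑ i ∈ Finset.Icc 2 (n+2), lam * (-u) ^ i * ((n+2-2).choose (i-2) : ℝ)
      = lam * u^2 * (1 - u)^n := by
    rw [← Finset.Ico_add_one_right_eq_Icc, Finset.sum_Ico_eq_sum_range]
    have : ∀ i ∈ Finset.range (n+2+1-2), lam * (-u) ^ (2+i) * ((n+2-2).choose (2+i-2) : ℝ)
        = (lam * u^2) * ((-u)^i * (n.choose i : ℝ)) := by
      intro i _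
      have : (-u)^(2+i) = u^2 * (-u)^i := by
        rw [pow_add]; ring
      rw [this]
      simp only [Nat.add_sub_cancel_left, Nat.add_sub_cancel]
      ring
    rw [Finset.sum_congr rfl this, ← Finset.mul_sum]
    have hbin : (1 - u)^n = ∑ i ∈ Finset.range (n+1), (-u)^i * (n.choose i : ℝ) := by
      have := add_pow (-u) 1 n
      simp only [one_pow, mul_one] at this
      rw [show (1:ℝ) - u = -u + 1 by ring, this]
    have hrange : n+2+1-2 = n+1 := by omega
    rw [hrange] at this ⊢
    rw [← hbin]
  rw [hsum]
  have hu2 : u^2 = Real.exp (-(2*lam)*t) := by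
    rw [hu, ← Real.exp_nat_mul]
    congr 1
    push_cast
    ring
  rw [hu2]
  push_cast
  ring

lemma iIndepFun_transfer {Ω : Type*} [MeasurableSpace Ω] {P : Measure Ω}
    [IsProbabilityMeasure P] {X Y : ℕ → Ω → ℝ}
    (h : iIndepFun X P)
    (hY : ∀ i, Y i =ᵐ[P] X i ∨ Y i = fun _ => (0:ℝ)) :
    iIndepFun Y P := by
  classical
  rw [iIndepFun_iff_measure_inter_preimage_eq_mul] at h ⊢
  intro S sets hsets
  set T : Finset ℕ := S.filter (fun i => Y i =ᵐ[P] X i) with hT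
  have hTsub : T ⊆ S := Finset.filter_subset _ _
  have hae : ∀ i ∈ T, Y i =ᵐ[P] X i := fun i hi => (Finset.mem_filter.mp hi).2
  have hconst : ∀ i ∈ S, i ∉ T → Y i = fun _ => (0:ℝ) := by
    intro i hiS hiT
    rcases hY i with hae' | hc
    · exact absurd (Finset.mem_filter.mpr ⟨hiS, hae'⟩) hiT
    · exact hc
  have hsetae : ∀ i ∈ T, (Y i ⁻¹' sets i : Set Ω) =ᵐ[P] (X i ⁻¹' sets i) := by
    intro i hi
    filter_upwards [hae i hi] with ω hω
    exact congrArg (fun z => z ∈ sets i) hω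
  by_cases hz : ∀ i ∈ S, i ∉ T → (0:ℝ) ∈ sets i
  · -- all constant coords have preimage univ
    have hSinter : (⋂ i ∈ S, Y i ⁻¹' sets i) = ⋂ i ∈ T, Y i ⁻¹' sets i := by
      ext ω
      simp only [Set.mem_iInter]
      constructor
      · exact fun hω i hi => hω i (hTsub hi)
      · intro hω i hiS
        by_cases hiT : i ∈ T
        · exact hω i hiT
        · rw [hconst i hiS hiT]
          simpa using hz i hiS hiT
    have hinter_ae : (⋂ i ∈ T, Y i ⁻¹' sets i : Set Ω) =ᵐ[P] (⋂ i ∈ T, X i ⁻¹' sets i) := by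
      have hall : ∀ᵐ ω ∂P, ∀ i ∈ T, Y i ω = X i ω :=
        (ae_ball_iff (T : Set ℕ).to_countable).mpr (fun i hi => hae i hi)
      rw [Filter.eventuallyEq_set]
      filter_upwards [hall] with ω hω
      simp only [Set.mem_iInter, Set.mem_preimage]
      constructor
      · intro h' i hi; rw [← hω i hi]; exact h' i hi
      · intro h' i hi; rw [hω i hi]; exact h' i hi
    rw [hSinter, measure_congr hinter_ae, h T (fun i hi => hsets i (hTsub hi))]
    rw [← Finset.prod_subset hTsub (fun i hiS hiT => by
      rw [hconst i hiS hiT]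
      have : ((fun _ : Ω => (0:ℝ)) ⁻¹' sets i) = Set.univ := by
        ext ω; simpa using hz i hiS hiT
      rw [this, measure_univ])]
    exact Finset.prod_congr rfl (fun i hi => (measure_congr (hsetae i hi)).symm)
  · push_neg at hz
    obtain ⟨i₀, hi₀S, hi₀T, h0⟩ := hz
    have hempty : (Y i₀ ⁻¹' sets i₀ : Set Ω) = ∅ := by
      rw [hconst i₀ hi₀S hi₀T]
      ext ω; simpa using h0
    have hL : P (⋂ i ∈ S, Y i ⁻¹' sets i) = 0 := by
      refine le_antisymm ?_ zero_le
      calc P (⋂ i ∈ S, Y i ⁻¹' sets i) ≤ P (Y i₀ ⁻¹' sets i₀) :=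
            measure_mono (Set.biInter_subset_of_mem hi₀S)
      _ = 0 := by rw [hempty, measure_empty]
    rw [hL, eq_comm]
    exact Finset.prod_eq_zero hi₀S (by rw [hempty, measure_empty])

theorem hypoexponential_density
    {Ω : Type*} [MeasurableSpace Ω] (P : Measure Ω) [IsProbabilityMeasure P]
    (lam : ℝ) (hlam : 0 < lam) (k : ℕ) (hk : 2 ≤ k)
    (X : ℕ → Ω → ℝ)
    (hindep : iIndepFun X P)
    (hdist : ∀ i ∈ Finset.Icc 2 k, Measure.map (X i) P = expMeasure (lam * i)) :
    Measure.map (fun ω => ∑ i ∈ Finset.Icc 2 k, X i ω) P =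
      volume.withDensity (fun t => ENNReal.ofReal
        (if 0 ≤ t then (k : ℝ) * ((k : ℝ) - 1) *
          ∑ i ∈ Finset.Icc 2 k, lam * (-Real.exp (-lam * t)) ^ i * (Nat.choose (k - 2) (i - 2))
        else 0)) := by
  classical
  obtain ⟨n, rfl⟩ : ∃ n, k = n + 2 := ⟨k - 2, by omega⟩
  have hae : ∀ i ∈ Finset.Icc 2 (n+2), AEMeasurable (X i) P := by
    intro i hi
    by_contra hna
    have h0 : Measure.map (X i) P = 0 := Measure.map_of_not_aemeasurable hna
    have hiprob : IsProbabilityMeasure (expMeasure (lam * i)) := by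
      refine isProbabilityMeasure_expMeasure ?_
      have : (2:ℝ) ≤ (i:ℝ) := by exact_mod_cast (Finset.mem_Icc.mp hi).1
      positivity
    rw [hdist i hi] at h0
    exact (IsProbabilityMeasure.ne_zero _) h0
  set Y : ℕ → Ω → ℝ := fun i =>
    if h : i ∈ Finset.Icc 2 (n+2) then (hae i h).mk (X i) else fun _ => 0 with hYdef
  have hYmeas : ∀ i, Measurable (Y i) := by
    intro i
    rw [hYdef]
    by_cases hi : i ∈ Finset.Icc 2 (n+2)
    · simp only [dif_pos hi]; exact (hae i hi).measurable_mk
    · simp only [dif_neg hi]; exact measurable_const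
  have hYae : ∀ i ∈ Finset.Icc 2 (n+2), Y i =ᵐ[P] X i := by
    intro i hi
    rw [hYdef]
    simp only [dif_pos hi]
    exact ((hae i hi).ae_eq_mk).symm
  have hYindep : iIndepFun Y P := by
    refine iIndepFun_transfer hindep ?_
    intro i
    by_cases hi : i ∈ Finset.Icc 2 (n+2)
    · exact Or.inl (hYae i hi)
    · exact Or.inr (by rw [hYdef]; simp only [dif_neg hi])
  have hYdist : ∀ i ∈ Finset.Icc 2 (n+2), Measure.map (Y i) P = expMeasure (lam * i) := by
    intro i hi
    rw [Measure.map_congr (hYae i hi), hdist i hi]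
  have hsum_ae : (fun ω => ∑ i ∈ Finset.Icc 2 (n+2), X i ω)
      =ᵐ[P] (fun ω => ∑ i ∈ Finset.Icc 2 (n+2), Y i ω) := by
    have hall : ∀ᵐ ω ∂P, ∀ i ∈ Finset.Icc 2 (n+2), Y i ω = X i ω :=
      (ae_ball_iff (Finset.Icc 2 (n+2) : Finset ℕ).countable_toSet).mpr
        (fun i hi => hYae i hi)
    filter_upwards [hall] with ω hω
    exact (Finset.sum_congr rfl (fun i hi => hω i hi)).symm
  rw [Measure.map_congr hsum_ae, aux_main P hlam n Y hYmeas hYindep hYdist]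
  congr 1 with t
  rw [← Fd_eq_sum lam n t]
end

section
/- For k ≥ 2 and t > 0, λ > 0, the hypoexponential density identity ∑_{i=2}^k λ i e^{-λit} ∏_{j=2, j≠i}^k j/(j-i) = ∑_{i=2}^k λ e^{-λit} (-1)^{i-2} k!/((k-i)!(i-2)!) holds. -/
open Finset Real

private lemma asc (a : ℕ) : ∀ n : ℕ, ∏ j ∈ Finset.Icc (a+1) (a+n), ((j:ℝ) - a) = Nat.factorial n := by
  intro n
  induction n with
  | zero => simp
  | succ n ih =>
      rw [show a + (n+1) = (a+n) + 1 by ring,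
        Finset.prod_Icc_succ_top (by omega)]
      rw [ih]
      push_cast [Nat.factorial_succ]
      ring

private lemma desc : ∀ (n a : ℕ), ∏ j ∈ Finset.Icc (a+1) (a+n), ((a:ℝ) + n + 1 - (j:ℝ)) = Nat.factorial n := by
  intro n
  induction n with
  | zero => simp
  | succ n ih =>
      intro a
      have hset : Finset.Icc (a+1) (a+(n+1)) = insert (a+1) (Finset.Icc (a+2) (a+(n+1))) := by
        ext x; simp [Finset.mem_Icc]; omega
      rw [hset, Finset.prod_insert (by simp [Finset.mem_Icc])]
      have h2 : Finset.Icc (a+2) (a+(n+1)) = Finset.Icc ((a+1)+1) ((a+1)+n) := by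
        congr 1 <;> omega
      have := ih (a+1)
      rw [h2]
      have heq2 : ∏ x ∈ Finset.Icc ((a+1)+1) ((a+1)+n), ((a:ℝ) + ((n+1:ℕ):ℝ) + 1 - (x:ℝ)) = (Nat.factorial n : ℝ) := by
        rw [← this]; apply Finset.prod_congr rfl; intro x hx; push_cast; ring
      rw [heq2]
      push_cast [Nat.factorial_succ]
      ring

private lemma key (k i : ℕ) (h2 : 2 ≤ i) (hik : i ≤ k) :
    (i:ℝ) * ∏ j ∈ (Finset.Icc 2 k).erase i, (j : ℝ) / ((j : ℝ) - (i : ℝ))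
      = (-1 : ℝ) ^ (i - 2) * (Nat.factorial k) / ((Nat.factorial (k - i)) * (Nat.factorial (i - 2))) := by
  have hmem : i ∈ Finset.Icc 2 k := Finset.mem_Icc.mpr ⟨h2, hik⟩
  -- product of numerators
  have hnum : ∏ j ∈ (Finset.Icc 2 k).erase i, (j:ℝ) = (Nat.factorial k) / i := by
    have htot : ∏ j ∈ Finset.Icc 2 k, (j:ℝ) = Nat.factorial k := by
      have h1 : Finset.Ico 1 (k+1) = insert 1 (Finset.Icc 2 k) := by
        ext x; simp [Finset.mem_Icc, Finset.mem_Ico]; omega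
      have := Finset.prod_Ico_id_eq_factorial k
      have hcast : ∏ j ∈ Finset.Ico 1 (k+1), (j:ℝ) = Nat.factorial k := by
        rw [← Nat.cast_prod]; exact_mod_cast congrArg (Nat.cast : ℕ → ℝ) this
      rw [h1, Finset.prod_insert (by simp [Finset.mem_Icc])] at hcast
      simpa using hcast
    have := Finset.prod_erase_mul (Finset.Icc 2 k) (fun j => (j:ℝ)) hmem
    rw [htot] at this
    field_simp
    linarith [this]
  -- product of denominators
  have hsplit : (Finset.Icc 2 k).erase i = Finset.Icc 2 (i-1) ∪ Finset.Icc (i+1) k := by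
    ext x; simp [Finset.mem_Icc]; omega
  have hdisj : Disjoint (Finset.Icc 2 (i-1)) (Finset.Icc (i+1) k) := by
    rw [Finset.disjoint_left]; intro x hx hx'
    simp [Finset.mem_Icc] at hx hx'; omega
  have hlow : ∏ j ∈ Finset.Icc 2 (i-1), ((j:ℝ) - i) = (-1:ℝ)^(i-2) * Nat.factorial (i-2) := by
    have hset : Finset.Icc 2 (i-1) = Finset.Icc (1+1) (1+(i-2)) := by congr 1 <;> omega
    have hd := desc (i-2) 1
    have hd' : ∏ j ∈ Finset.Icc (1+1) (1+(i-2)), ((i:ℝ) - j) = (Nat.factorial (i-2) : ℝ) := by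
      rw [← hd]; apply Finset.prod_congr rfl; intro x hx
      have hc : ((i-2:ℕ):ℝ) = (i:ℝ) - 2 := by
        push_cast [Nat.cast_sub h2]; ring
      rw [hc]; push_cast; ring
    have hcard : (Finset.Icc (1+1) (1+(i-2))).card = i - 2 := by
      rw [Nat.card_Icc]; omega
    calc ∏ j ∈ Finset.Icc 2 (i-1), ((j:ℝ) - i)
        = ∏ j ∈ Finset.Icc (1+1) (1+(i-2)), (-((i:ℝ) - j)) := by
          rw [hset]; apply Finset.prod_congr rfl; intro x hx; ring
      _ = (-1:ℝ)^(i-2) * ∏ j ∈ Finset.Icc (1+1) (1+(i-2)), ((i:ℝ) - j) := by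
          rw [show ((-1:ℝ)^(i-2)) = ∏ _x ∈ Finset.Icc (1+1) (1+(i-2)), (-1:ℝ) by
              rw [Finset.prod_const, hcard],
            ← Finset.prod_mul_distrib]
          apply Finset.prod_congr rfl; intro x hx; ring
      _ = (-1:ℝ)^(i-2) * Nat.factorial (i-2) := by rw [hd']
  have hhigh : ∏ j ∈ Finset.Icc (i+1) k, ((j:ℝ) - i) = Nat.factorial (k-i) := by
    have hset : Finset.Icc (i+1) k = Finset.Icc (i+1) (i+(k-i)) := by congr 1; omega
    rw [hset]; exact asc i (k-i)
  have hden : ∏ j ∈ (Finset.Icc 2 k).erase i, ((j:ℝ) - i)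
      = (-1:ℝ)^(i-2) * Nat.factorial (i-2) * Nat.factorial (k-i) := by
    rw [hsplit, Finset.prod_union hdisj, hlow, hhigh]
  have hprod : ∏ j ∈ (Finset.Icc 2 k).erase i, (j : ℝ) / ((j : ℝ) - (i : ℝ))
      = (∏ j ∈ (Finset.Icc 2 k).erase i, (j:ℝ)) / (∏ j ∈ (Finset.Icc 2 k).erase i, ((j:ℝ) - i)) := by
    rw [Finset.prod_div_distrib]
  rw [hprod, hnum, hden]
  have hi0 : (i:ℝ) ≠ 0 := by positivity
  have hf1 : (Nat.factorial (i-2) : ℝ) ≠ 0 := Nat.cast_ne_zero.mpr (Nat.factorial_ne_zero _)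
  have hf2 : (Nat.factorial (k-i) : ℝ) ≠ 0 := Nat.cast_ne_zero.mpr (Nat.factorial_ne_zero _)
  have hneg : (-1:ℝ)^(i-2) ≠ 0 := by positivity
  have hsq : (-1:ℝ)^(i-2) * (-1:ℝ)^(i-2) = 1 := by
    rw [← pow_add]; exact Even.neg_one_pow ⟨i-2, rfl⟩
  field_simp
  ring_nf
  rw [show ((-1:ℝ)^((i-2)*2)) = 1 by rw [mul_comm, pow_mul]; norm_num]

theorem hypoexponential_partial_fraction (k : ℕ) (hk : 2 ≤ k) (t lam : ℝ)
    (ht : 0 < t) (hlam : 0 < lam) :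
    ∑ i ∈ Finset.Icc 2 k, lam * (i : ℝ) * Real.exp (-lam * i * t) *
        ∏ j ∈ (Finset.Icc 2 k).erase i, (j : ℝ) / ((j : ℝ) - (i : ℝ))
      = ∑ i ∈ Finset.Icc 2 k, lam * Real.exp (-lam * i * t) * (-1 : ℝ) ^ (i - 2) *
          (Nat.factorial k) / ((Nat.factorial (k - i)) * (Nat.factorial (i - 2))) := by
  apply Finset.sum_congr rfl
  intro i hi
  rw [Finset.mem_Icc] at hi
  have hkey := key k i hi.1 hi.2
  calc lam * (i : ℝ) * Real.exp (-lam * i * t) *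
        ∏ j ∈ (Finset.Icc 2 k).erase i, (j : ℝ) / ((j : ℝ) - (i : ℝ))
      = lam * Real.exp (-lam * i * t) *
        ((i:ℝ) * ∏ j ∈ (Finset.Icc 2 k).erase i, (j : ℝ) / ((j : ℝ) - (i : ℝ))) := by ring
    _ = lam * Real.exp (-lam * i * t) *
        ((-1 : ℝ) ^ (i - 2) * (Nat.factorial k) / ((Nat.factorial (k - i)) * (Nat.factorial (i - 2)))) := by rw [hkey]
    _ = lam * Real.exp (-lam * i * t) * (-1 : ℝ) ^ (i - 2) *
          (Nat.factorial k) / ((Nat.factorial (k - i)) * (Nat.factorial (i - 2))) := by ring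
end

section
/- The improper integral ∫₀^∞ (1 - e^{-x})/(x(2+x)) dx converges and its value c satisfies 0.81 < c < 0.82. -/
open Real MeasureTheory Set Finset intervalIntegral




noncomputable def EE (n : ℕ) (x : ℝ) : ℝ := ∑ k ∈ Finset.range (n+1), (-x)^k / (Nat.factorial k)

lemma EE_zero (n : ℕ) : EE n 0 = 1 := by
  rw [EE, Finset.sum_eq_single 0]
  · simp
  · intro k _ hk
    rw [neg_zero, zero_pow hk, zero_div]
  · simp

lemma hasDerivAt_EE (n : ℕ) (x : ℝ) :
    HasDerivAt (fun y => EE (n+1) y) (-(EE n x)) x := by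
  have h : ∀ k ∈ Finset.range (n+2), HasDerivAt (fun y : ℝ => (-y)^k / (Nat.factorial k))
      ((k * (-x)^(k-1) * (-1)) / (Nat.factorial k)) x := by
    intro k _
    exact (((hasDerivAt_pow k (-x)).comp x ((hasDerivAt_id x).neg)).div_const _)
  have hsum := HasDerivAt.fun_sum h
  refine hsum.congr_deriv ?_
  rw [Finset.sum_range_succ']
  have : ∀ i ∈ Finset.range (n+1),
      (((i+1 : ℕ) : ℝ) * (-x)^((i+1)-1) * (-1)) / (Nat.factorial (i+1)) = -((-x)^i / (Nat.factorial i)) := by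
    intro i _
    rw [Nat.add_sub_cancel, Nat.factorial_succ]
    have h1 : (Nat.factorial i : ℝ) ≠ 0 := Nat.cast_ne_zero.mpr (Nat.factorial_ne_zero i)
    have h2 : ((i:ℝ)+1) ≠ 0 := by positivity
    push_cast
    field_simp
  rw [Finset.sum_congr rfl this]
  simp [EE, Finset.sum_neg_distrib]

lemma EE_ge (n : ℕ) : ∀ x : ℝ, 0 ≤ x → 0 ≤ (-1)^n * (EE n x - Real.exp (-x)) := by
  induction n with
  | zero =>
    intro x hx
    have hE : EE 0 x = 1 := by simp [EE]
    have : Real.exp (-x) ≤ 1 := by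
      rw [← Real.exp_zero]
      exact Real.exp_le_exp.mpr (by linarith)
    rw [hE]
    simp only [pow_zero, one_mul]
    linarith
  | succ n ih =>
    intro x hx
    set G : ℝ → ℝ := fun y => (-1)^(n+1) * (EE (n+1) y - Real.exp (-y)) with hG
    have hderiv : ∀ y : ℝ, HasDerivAt G ((-1)^n * (EE n y - Real.exp (-y))) y := by
      intro y
      have h1 : HasDerivAt (fun z : ℝ => Real.exp (-z)) (-Real.exp (-y)) y := by
        exact ((Real.hasDerivAt_exp (-y)).comp y ((hasDerivAt_id y).neg)).congr_deriv (by simp)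
      have h2 := ((hasDerivAt_EE n y).sub h1).const_mul ((-1:ℝ)^(n+1))
      refine h2.congr_deriv ?_
      rw [pow_succ]
      ring
    have hmono : MonotoneOn G (Set.Ici 0) := by
      apply monotoneOn_of_deriv_nonneg (convex_Ici 0)
      · exact (Continuous.continuousOn (by
          have : Continuous G := by
            apply continuous_const.mul
            apply Continuous.sub
            · apply continuous_finset_sum
              intro k _
              exact (continuous_neg.pow k).div_const _
            · exact Real.continuous_exp.comp continuous_neg
          exact this))
      · intro y _
        exact ((hderiv y).differentiableAt).differentiableWithinAt
      · intro y hy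
        rw [(hderiv y).deriv]
        exact ih y (le_of_lt (by simpa using hy))
    have h0 : G 0 = 0 := by
      simp [hG, EE_zero]
    have := hmono (Set.self_mem_Ici) (Set.mem_Ici.mpr hx) hx
    rw [h0] at this
    exact this

lemma one_sub_EE (n : ℕ) (x : ℝ) :
    1 - EE n x = x * ∑ j ∈ Finset.range n, (-1)^j * x^j / (Nat.factorial (j+1)) := by
  induction n with
  | zero => simp [EE]
  | succ n ih =>
    rw [Finset.mul_sum, Finset.sum_range_succ, ← Finset.mul_sum, ← ih]
    have : EE (n+1) x = EE n x + (-x)^(n+1) / (Nat.factorial (n+1)) := by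
      rw [EE, EE, Finset.sum_range_succ]
    rw [this]
    have h1 : (Nat.factorial (n+1) : ℝ) ≠ 0 := Nat.cast_ne_zero.mpr (Nat.factorial_ne_zero _)
    have h2 : (-x)^(n+1) = (-1)^(n+1) * x^(n+1) := by
      rw [neg_pow]
    rw [h2, pow_succ]
    field_simp
    ring





noncomputable def J (k : ℕ) : ℝ := ∫ x in (0:ℝ)..14, x^k / (2+x)

lemma contOn (k : ℕ) : ContinuousOn (fun x : ℝ => x^k / (2+x)) (Set.Icc 0 14) := by
  apply ContinuousOn.div
  · exact (continuous_pow k).continuousOn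
  · exact (continuous_const.add continuous_id).continuousOn
  · intro x hx
    have := hx.1
    intro h
    linarith [this]

lemma intervalIntegrable_J (k : ℕ) :
    IntervalIntegrable (fun x : ℝ => x^k / (2+x)) volume 0 14 := by
  apply ContinuousOn.intervalIntegrable
  rw [Set.uIcc_of_le (by norm_num : (0:ℝ) ≤ 14)]
  exact contOn k

lemma J_zero : J 0 = 3 * Real.log 2 := by
  rw [J]
  have h : ∀ x ∈ Set.uIcc (0:ℝ) 14, HasDerivAt (fun y => Real.log (2+y)) (x^0/(2+x)) x := by
    intro x hx
    rw [Set.uIcc_of_le (by norm_num)] at hx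
    have h2 : (2+x) ≠ 0 := by have := hx.1; intro h; linarith
    have := (Real.hasDerivAt_log h2).comp x ((hasDerivAt_id x).const_add 2)
    exact this.congr_deriv (by simp)
  rw [intervalIntegral.integral_eq_sub_of_hasDerivAt h (intervalIntegrable_J 0)]
  have : (2:ℝ) + 14 = 2^4 := by norm_num
  rw [show (2:ℝ)+14 = 16 by norm_num, show (2:ℝ)+0 = 2 by norm_num,
    show (16:ℝ) = 2^4 by norm_num, Real.log_pow]
  push_cast
  ring

lemma J_rec (k : ℕ) : J (k+1) = 14^(k+1) / (k+1) - 2 * J k := by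
  have hadd : J (k+1) + 2 * J k = ∫ x in (0:ℝ)..14, x^k := by
    rw [J, J, ← intervalIntegral.integral_const_mul, ← intervalIntegral.integral_add
      (intervalIntegrable_J (k+1)) ((intervalIntegrable_J k).const_mul 2)]
    apply intervalIntegral.integral_congr
    intro x hx
    rw [Set.uIcc_of_le (by norm_num)] at hx
    have h2 : (2+x) ≠ 0 := by have := hx.1; intro h; linarith
    field_simp
    ring
  rw [integral_pow] at hadd
  norm_num at hadd
  push_cast at hadd ⊢
  linarith [hadd]

lemma Jv0 : J 0 = (0:ℝ) + 3 * Real.log 2 := by rw [J_zero]; ring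

lemma Jv1 : J 1 = (14 : ℝ) + (-6 : ℝ) * Real.log 2 := by
  have h := J_rec 0
  rw [Jv0] at h
  norm_num at h
  linarith [h]

lemma Jv2 : J 2 = (70 : ℝ) + (12 : ℝ) * Real.log 2 := by
  have h := J_rec 1
  rw [Jv1] at h
  norm_num at h
  linarith [h]

lemma Jv3 : J 3 = (2324/3 : ℝ) + (-24 : ℝ) * Real.log 2 := by
  have h := J_rec 2
  rw [Jv2] at h
  norm_num at h
  linarith [h]

lemma Jv4 : J 4 = (24164/3 : ℝ) + (48 : ℝ) * Real.log 2 := by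
  have h := J_rec 3
  rw [Jv3] at h
  norm_num at h
  linarith [h]

lemma Jv5 : J 5 = (1371832/15 : ℝ) + (-96 : ℝ) * Real.log 2 := by
  have h := J_rec 4
  rw [Jv4] at h
  norm_num at h
  linarith [h]

lemma Jv6 : J 6 = (16080176/15 : ℝ) + (192 : ℝ) * Real.log 2 := by
  have h := J_rec 5
  rw [Jv5] at h
  norm_num at h
  linarith [h]

lemma Jv7 : J 7 = (193725728/15 : ℝ) + (-384 : ℝ) * Real.log 2 := by
  have h := J_rec 6
  rw [Jv6] at h
  norm_num at h
  linarith [h]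

lemma Jv8 : J 8 = (2379653024/15 : ℝ) + (768 : ℝ) * Real.log 2 := by
  have h := J_rec 7
  rw [Jv7] at h
  norm_num at h
  linarith [h]

lemma Jv9 : J 9 = (89027315776/45 : ℝ) + (-1536 : ℝ) * Real.log 2 := by
  have h := J_rec 8
  rw [Jv8] at h
  norm_num at h
  linarith [h]

lemma Jv10 : J 10 = (224718263168/9 : ℝ) + (3072 : ℝ) * Real.log 2 := by
  have h := J_rec 9
  rw [Jv9] at h
  norm_num at h
  linarith [h]

lemma Jv11 : J 11 = (31502284737280/99 : ℝ) + (-6144 : ℝ) * Real.log 2 := by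
  have h := J_rec 10
  rw [Jv10] at h
  norm_num at h
  linarith [h]

lemma Jv12 : J 12 = (404720207621632/99 : ℝ) + (12288 : ℝ) * Real.log 2 := by
  have h := J_rec 11
  rw [Jv11] at h
  norm_num at h
  linarith [h]

lemma Jv13 : J 13 = (68055037153997824/1287 : ℝ) + (-24576 : ℝ) * Real.log 2 := by
  have h := J_rec 12
  rw [Jv12] at h
  norm_num at h
  linarith [h]

lemma Jv14 : J 14 = (885400838870087680/1287 : ℝ) + (49152 : ℝ) * Real.log 2 := by
  have h := J_rec 13
  rw [Jv13] at h
  norm_num at h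
  linarith [h]

lemma Jv15 : J 15 = (57884704605600567296/6435 : ℝ) + (-98304 : ℝ) * Real.log 2 := by
  have h := J_rec 14
  rw [Jv14] at h
  norm_num at h
  linarith [h]

lemma Jv16 : J 16 = (760176198839005319168/6435 : ℝ) + (196608 : ℝ) * Real.log 2 := by
  have h := J_rec 15
  rw [Jv15] at h
  norm_num at h
  linarith [h]

lemma Jv17 : J 17 = (170365825442720064790528/109395 : ℝ) + (-393216 : ℝ) * Real.log 2 := by
  have h := J_rec 16
  rw [Jv16] at h
  norm_num at h
  linarith [h]

lemma Jv18 : J 18 = (2253624585579704673910784/109395 : ℝ) + (786432 : ℝ) * Real.log 2 := by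
  have h := J_rec 17
  rw [Jv17] at h
  norm_num at h
  linarith [h]

lemma Jv19 : J 19 = (568140037337187712871333888/2078505 : ℝ) + (-1572864 : ℝ) * Real.log 2 := by
  have h := J_rec 18
  rw [Jv18] at h
  norm_num at h
  linarith [h]

lemma Jv20 : J 20 = (7558964287462203897640583168/2078505 : ℝ) + (3145728 : ℝ) * Real.log 2 := by
  have h := J_rec 19
  rw [Jv19] at h
  norm_num at h
  linarith [h]

lemma Jv21 : J 21 = (100818662920229983183162179584/2078505 : ℝ) + (-6291456 : ℝ) * Real.log 2 := by
  have h := J_rec 20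
  rw [Jv20] at h
  norm_num at h
  linarith [h]

lemma Jv22 : J 22 = (1347697124140239622163782172672/2078505 : ℝ) + (12582912 : ℝ) * Real.log 2 := by
  have h := J_rec 21
  rw [Jv21] at h
  norm_num at h
  linarith [h]

lemma Jv23 : J 23 = (415200942883604450647738831863808/47805615 : ℝ) + (-25165824 : ℝ) * Real.log 2 := by
  have h := J_rec 22
  rw [Jv22] at h
  norm_num at h
  linarith [h]

lemma Jv24 : J 24 = (5571964506369702031707099228012544/47805615 : ℝ) + (50331648 : ℝ) * Real.log 2 := by
  have h := J_rec 23
  rw [Jv23] at h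
  norm_num at h
  linarith [h]

lemma Jv25 : J 25 = (374519376487903394380702174844813312/239028075 : ℝ) + (-100663296 : ℝ) * Real.log 2 := by
  have h := J_rec 24
  rw [Jv24] at h
  norm_num at h
  linarith [h]

lemma Jv26 : J 26 = (5042640383295737255247080592376856576/239028075 : ℝ) + (201326592 : ℝ) * Real.log 2 := by
  have h := J_rec 25
  rw [Jv25] at h
  norm_num at h
  linarith [h]

lemma Jv27 : J 27 = (203985402767208024470638462991538847744/717084225 : ℝ) + (-402653184 : ℝ) * Real.log 2 := by
  have h := J_rec 26
  rw [Jv26] at h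
  norm_num at h
  linarith [h]

lemma Jv28 : J 28 = (2754286002869846999087355852385222131712/717084225 : ℝ) + (805306368 : ℝ) * Real.log 2 := by
  have h := J_rec 27
  rw [Jv27] at h
  norm_num at h
  linarith [h]

lemma Jv29 : J 29 = (1079856080728019988880157409682030648623104/20795442525 : ℝ) + (-1610612736 : ℝ) * Real.log 2 := by
  have h := J_rec 28
  rw [Jv28] at h
  norm_num at h
  linarith [h]

lemma Jv30 : J 30 = (14616271024249135776234783978731660506038272/20795442525 : ℝ) + (3221225472 : ℝ) * Real.log 2 := by
  have h := J_rec 29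
  rw [Jv29] at h
  norm_num at h
  linarith [h]

lemma Jv31 : J 31 = (6139704134492727398551384888518840206005108736/644658718275 : ℝ) + (-6442450944 : ℝ) * Real.log 2 := by
  have h := J_rec 30
  rw [Jv30] at h
  norm_num at h
  linarith [h]

lemma Jv32 : J 32 = (83280785952587652591591811751615074909949001728/644658718275 : ℝ) + (12884901888 : ℝ) * Real.log 2 := by
  have h := J_rec 31
  rw [Jv31] at h
  norm_num at h
  linarith [h]

lemma Jv33 : J 33 = (1130740458739211122396670089370601195157002911744/644658718275 : ℝ) + (-25769803776 : ℝ) * Real.log 2 := by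
  have h := J_rec 32
  rw [Jv32] at h
  norm_num at h
  linarith [h]

lemma Jv34 : J 34 = (15366564322454122741732907331485564709078000730112/644658718275 : ℝ) + (51539607552 : ℝ) * Real.log 2 := by
  have h := J_rec 33
  rw [Jv33] at h
  norm_num at h
  linarith [h]

lemma fact1 : Nat.factorial 1 = 1 := by rfl

lemma fact2 : Nat.factorial 2 = 2 := by rfl

lemma fact3 : Nat.factorial 3 = 6 := by rfl

lemma fact4 : Nat.factorial 4 = 24 := by rfl

lemma fact5 : Nat.factorial 5 = 120 := by rfl

lemma fact6 : Nat.factorial 6 = 720 := by rfl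

lemma fact7 : Nat.factorial 7 = 5040 := by rfl

lemma fact8 : Nat.factorial 8 = 40320 := by rfl

lemma fact9 : Nat.factorial 9 = 362880 := by rfl

lemma fact10 : Nat.factorial 10 = 3628800 := by rfl

lemma fact11 : Nat.factorial 11 = 39916800 := by rfl

lemma fact12 : Nat.factorial 12 = 479001600 := by rfl

lemma fact13 : Nat.factorial 13 = 6227020800 := by rfl

lemma fact14 : Nat.factorial 14 = 87178291200 := by rfl

lemma fact15 : Nat.factorial 15 = 1307674368000 := by rfl

lemma fact16 : Nat.factorial 16 = 20922789888000 := by rfl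

lemma fact17 : Nat.factorial 17 = 355687428096000 := by rfl

lemma fact18 : Nat.factorial 18 = 6402373705728000 := by rfl

lemma fact19 : Nat.factorial 19 = 121645100408832000 := by rfl

lemma fact20 : Nat.factorial 20 = 2432902008176640000 := by rfl

lemma fact21 : Nat.factorial 21 = 51090942171709440000 := by rfl

lemma fact22 : Nat.factorial 22 = 1124000727777607680000 := by rfl

lemma fact23 : Nat.factorial 23 = 25852016738884976640000 := by rfl

lemma fact24 : Nat.factorial 24 = 620448401733239439360000 := by rfl

lemma fact25 : Nat.factorial 25 = 15511210043330985984000000 := by rfl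

lemma fact26 : Nat.factorial 26 = 403291461126605635584000000 := by rfl

lemma fact27 : Nat.factorial 27 = 10888869450418352160768000000 := by rfl

lemma fact28 : Nat.factorial 28 = 304888344611713860501504000000 := by rfl

lemma fact29 : Nat.factorial 29 = 8841761993739701954543616000000 := by rfl

lemma fact30 : Nat.factorial 30 = 265252859812191058636308480000000 := by rfl

lemma fact31 : Nat.factorial 31 = 8222838654177922817725562880000000 := by rfl

lemma fact32 : Nat.factorial 32 = 263130836933693530167218012160000000 := by rfl

lemma fact33 : Nat.factorial 33 = 8683317618811886495518194401280000000 := by rfl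

lemma fact34 : Nat.factorial 34 = 295232799039604140847618609643520000000 := by rfl

lemma fact35 : Nat.factorial 35 = 10333147966386144929666651337523200000000 := by rfl

lemma sum_lower_val : ∑ j ∈ Finset.range 34, ((-1)^j / (Nat.factorial (j+1) : ℝ)) * J j = (-199044610335758423867261842319937988655917/33762553941212214246074426915466281250000 : ℝ) + (5630498427552475077878024974/587514894257475002803359375 : ℝ) * Real.log 2 := by
  simp only [Finset.sum_range_succ, Finset.sum_range_zero, Jv0, Jv1, Jv2, Jv3, Jv4, Jv5, Jv6, Jv7, Jv8, Jv9, Jv10, Jv11, Jv12, Jv13, Jv14, Jv15, Jv16, Jv17, Jv18, Jv19, Jv20, Jv21, Jv22, Jv23, Jv24, Jv25, Jv26, Jv27, Jv28, Jv29, Jv30, Jv31, Jv32, Jv33, Jv34, fact1, fact2, fact3, fact4, fact5, fact6, fact7, fact8, fact9, fact10, fact11, fact12, fact13, fact14, fact15, fact16, fact17, fact18]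
  norm_num [fact1, fact2, fact3, fact4, fact5, fact6, fact7, fact8, fact9, fact10, fact11, fact12, fact13, fact14, fact15, fact16, fact17, fact18, fact19, fact20, fact21, fact22, fact23, fact24, fact25, fact26, fact27, fact28, fact29, fact30, fact31, fact32, fact33, fact34, fact35]
  ring_nf

lemma sum_upper_val : ∑ j ∈ Finset.range 35, ((-1)^j / (Nat.factorial (j+1) : ℝ)) * J j = (-1607038941580124310145985967054501076180723/272697551063637115064447294317227656250000 : ℝ) + (7685630353609128481303504089514/801957830661453378826585546875 : ℝ) * Real.log 2 := by
  simp only [Finset.sum_range_succ, Finset.sum_range_zero, Jv0, Jv1, Jv2, Jv3, Jv4, Jv5, Jv6, Jv7, Jv8, Jv9, Jv10, Jv11, Jv12, Jv13, Jv14, Jv15, Jv16, Jv17, Jv18, Jv19, Jv20, Jv21, Jv22, Jv23, Jv24, Jv25, Jv26, Jv27, Jv28, Jv29, Jv30, Jv31, Jv32, Jv33, Jv34, fact1, fact2, fact3, fact4, fact5, fact6, fact7, fact8, fact9, fact10, fact11, fact12, fact13, fact14, fact15, fact16, fact17, fact18]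
  norm_num [fact1, fact2, fact3, fact4, fact5, fact6, fact7, fact8, fact9, fact10, fact11, fact12, fact13, fact14, fact15, fact16, fact17, fact18, fact19, fact20, fact21, fact22, fact23, fact24, fact25, fact26, fact27, fact28, fact29, fact30, fact31, fact32, fact33, fact34, fact35]
  ring_nf




noncomputable def ff : ℝ → ℝ := fun x => (1 - Real.exp (-x)) / (x * (2 + x))

noncomputable def glow : ℝ → ℝ :=
  fun x => (∑ j ∈ Finset.range 34, (-1)^j * x^j / (Nat.factorial (j+1))) / (2+x)

noncomputable def gup : ℝ → ℝ :=
  fun x => (∑ j ∈ Finset.range 35, (-1)^j * x^j / (Nat.factorial (j+1))) / (2+x)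

lemma ptwise_lower {x : ℝ} (hx : 0 < x) : glow x ≤ ff x := by
  have hE := EE_ge 34 x hx.le
  norm_num at hE
  have hid := one_sub_EE 34 x
  have h2x : (0:ℝ) < 2 + x := by linarith
  rw [glow, ff, div_le_div_iff₀ h2x (by positivity)]
  have hxS : x * ∑ j ∈ Finset.range 34, (-1)^j * x^j / (Nat.factorial (j+1)) ≤ 1 - Real.exp (-x) := by
    rw [← hid]; linarith
  nlinarith [hxS, h2x]

lemma ptwise_upper {x : ℝ} (hx : 0 < x) : ff x ≤ gup x := by
  have hE := EE_ge 35 x hx.le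
  norm_num [pow_succ] at hE
  have hid := one_sub_EE 35 x
  have h2x : (0:ℝ) < 2 + x := by linarith
  rw [gup, ff, div_le_div_iff₀ (by positivity) h2x]
  have hxS : 1 - Real.exp (-x) ≤ x * ∑ j ∈ Finset.range 35, (-1)^j * x^j / (Nat.factorial (j+1)) := by
    rw [← hid]; linarith
  nlinarith [hxS, h2x]

lemma contOn_glow : ContinuousOn glow (Set.Icc 0 14) := by
  apply ContinuousOn.div
  · exact (continuous_finset_sum _ fun j _ =>
      ((continuous_const.mul (continuous_pow j)).div_const _)).continuousOn
  · exact (continuous_const.add continuous_id).continuousOn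
  · intro x hx; have := hx.1; intro h; linarith

lemma contOn_gup : ContinuousOn gup (Set.Icc 0 14) := by
  apply ContinuousOn.div
  · exact (continuous_finset_sum _ fun j _ =>
      ((continuous_const.mul (continuous_pow j)).div_const _)).continuousOn
  · exact (continuous_const.add continuous_id).continuousOn
  · intro x hx; have := hx.1; intro h; linarith

lemma int_glow : ∫ x in (0:ℝ)..14, glow x
    = ∑ j ∈ Finset.range 34, ((-1)^j / (Nat.factorial (j+1) : ℝ)) * J j := by
  have hfun : ∀ x : ℝ, glow x = ∑ j ∈ Finset.range 34,
      ((-1)^j / (Nat.factorial (j+1) : ℝ)) * (x^j / (2+x)) := by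
    intro x
    rw [glow, Finset.sum_div]
    refine Finset.sum_congr rfl fun j _ => by ring
  simp only [hfun]
  rw [intervalIntegral.integral_finset_sum]
  · exact Finset.sum_congr rfl fun j _ => intervalIntegral.integral_const_mul _ _
  · exact fun j _ => (intervalIntegrable_J j).const_mul _

lemma int_gup : ∫ x in (0:ℝ)..14, gup x
    = ∑ j ∈ Finset.range 35, ((-1)^j / (Nat.factorial (j+1) : ℝ)) * J j := by
  have hfun : ∀ x : ℝ, gup x = ∑ j ∈ Finset.range 35,
      ((-1)^j / (Nat.factorial (j+1) : ℝ)) * (x^j / (2+x)) := by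
    intro x
    rw [gup, Finset.sum_div]
    refine Finset.sum_congr rfl fun j _ => by ring
  simp only [hfun]
  rw [intervalIntegral.integral_finset_sum]
  · exact Finset.sum_congr rfl fun j _ => intervalIntegral.integral_const_mul _ _
  · exact fun j _ => (intervalIntegrable_J j).const_mul _

lemma ff_nonneg {x : ℝ} (hx : 0 < x) : 0 ≤ ff x := by
  rw [ff]
  have : Real.exp (-x) ≤ 1 := by
    rw [← Real.exp_zero]; exact Real.exp_le_exp.mpr (by linarith)
  apply div_nonneg (by linarith) (by positivity)

lemma contOn_ff : ContinuousOn ff (Set.Ioi 0) := by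
  apply ContinuousOn.div
  · exact (continuous_const.sub (Real.continuous_exp.comp continuous_neg)).continuousOn
  · exact (continuous_id.mul (continuous_const.add continuous_id)).continuousOn
  · intro x hx
    have : (0:ℝ) < x := hx
    positivity

lemma meas_ff : AEStronglyMeasurable ff (volume.restrict (Set.Ioi 0)) :=
  contOn_ff.aestronglyMeasurable measurableSet_Ioi

lemma integrableOn_ff_Ioc : IntegrableOn ff (Set.Ioc 0 14) volume := by
  apply Integrable.mono' (integrable_const (1/2 : ℝ))
    (meas_ff.mono_set Set.Ioc_subset_Ioi_self)
  rw [ae_restrict_iff' measurableSet_Ioc]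
  apply ae_of_all
  intro x hx
  have hx0 : 0 < x := hx.1
  rw [Real.norm_eq_abs, abs_of_nonneg (ff_nonneg hx0), ff, div_le_iff₀ (by positivity)]
  have hexp : 1 - x ≤ Real.exp (-x) := by
    have := Real.add_one_le_exp (-x); linarith
  nlinarith [hexp, hx0]

lemma deriv_inv_sq : ∀ x ∈ Set.Ici (14:ℝ),
    HasDerivAt (fun y : ℝ => -((y+1)⁻¹)) (((x+1)^2)⁻¹) x := by
  intro x hx
  have hne : x + 1 ≠ 0 := by have : (14:ℝ) ≤ x := hx; intro h; linarith
  have h1 : HasDerivAt (fun y : ℝ => (y+1)⁻¹) (-((x+1)^2)⁻¹ * 1) x :=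
    (hasDerivAt_inv hne).comp x ((hasDerivAt_id x).add_const 1)
  have := h1.neg
  exact this.congr_deriv (by simp)

lemma tendsto_inv_shift : Filter.Tendsto (fun y : ℝ => -((y+1)⁻¹)) Filter.atTop (nhds 0) := by
  have h : Filter.Tendsto (fun y : ℝ => (y+1)⁻¹) Filter.atTop (nhds 0) :=
    Filter.Tendsto.inv_tendsto_atTop (Filter.tendsto_atTop_add_const_right _ 1 Filter.tendsto_id)
  simpa using h.neg

lemma integrableOn_inv_sq : IntegrableOn (fun x : ℝ => ((x+1)^2)⁻¹) (Set.Ioi 14) volume :=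
  integrableOn_Ioi_deriv_of_nonneg' deriv_inv_sq
    (fun x _ => by positivity) tendsto_inv_shift

lemma integral_inv_sq : ∫ x in Set.Ioi (14:ℝ), ((x+1)^2)⁻¹ = 1/15 := by
  rw [integral_Ioi_of_hasDerivAt_of_nonneg' deriv_inv_sq (fun x _ => by positivity)
    tendsto_inv_shift]
  norm_num

lemma exp_neg_le {x : ℝ} (hx : (14:ℝ) ≤ x) : Real.exp (-x) ≤ 1/16384 := by
  have h1 : Real.exp (-x) ≤ Real.exp (-14) := Real.exp_le_exp.mpr (by linarith)
  have h2 : (2:ℝ)^(14:ℕ) ≤ Real.exp 14 := by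
    rw [show (14:ℝ) = (14:ℕ) * 1 by norm_num, Real.exp_nat_mul]
    apply pow_le_pow_left₀ (by norm_num)
    have := Real.exp_one_gt_d9
    linarith
  have h3 : Real.exp (-14) = (Real.exp 14)⁻¹ := by
    rw [Real.exp_neg]
  have h4 : Real.exp (-14) ≤ ((2:ℝ)^(14:ℕ))⁻¹ := by
    rw [h3]
    apply inv_anti₀ (by positivity) h2
  calc Real.exp (-x) ≤ Real.exp (-14) := h1
    _ ≤ ((2:ℝ)^(14:ℕ))⁻¹ := h4
    _ = 1/16384 := by norm_num

lemma ff_tail_upper {x : ℝ} (hx : x ∈ Set.Ioi (14:ℝ)) :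
    ff x ≤ (225/224) * ((x+1)^2)⁻¹ := by
  have hx14 : (14:ℝ) < x := hx
  have hexp : 0 < Real.exp (-x) := Real.exp_pos _
  rw [ff, div_le_iff₀ (by nlinarith)]
  have h1 : ((x+1)^2)⁻¹ * (x+1)^2 = 1 := by
    apply inv_mul_cancel₀; positivity
  have h2 : (224:ℝ) * (x+1)^2 ≤ 225 * (x * (2+x)) := by nlinarith
  have h3 : (0:ℝ) < (x+1)^2 := by positivity
  have h4 : ((x+1)^2)⁻¹ ≥ 0 := by positivity
  nlinarith [h1, h2, h4, mul_pos (show (0:ℝ) < ((x+1)^2)⁻¹ by positivity) h3]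

lemma ff_tail_lower {x : ℝ} (hx : x ∈ Set.Ioi (14:ℝ)) :
    (16383/16384) * ((x+1)^2)⁻¹ ≤ ff x := by
  have hx14 : (14:ℝ) < x := hx
  have hexp : Real.exp (-x) ≤ 1/16384 := exp_neg_le hx14.le
  have h3 : (0:ℝ) < (x+1)^2 := by positivity
  have hd : (0:ℝ) < x * (2+x) := by nlinarith
  have heq : (16383:ℝ)/16384 * ((x+1)^2)⁻¹ = (16383/16384) / (x+1)^2 := by
    field_simp
  rw [ff, heq, div_le_div_iff₀ h3 hd]
  nlinarith [hexp]

lemma integrableOn_ff_Ioi14 : IntegrableOn ff (Set.Ioi 14) volume := by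
  apply Integrable.mono' (integrableOn_inv_sq.const_mul (225/224 : ℝ))
    (meas_ff.mono_set (fun x hx => by
      have : (14:ℝ) < x := hx
      exact Set.mem_Ioi.mpr (by linarith)))
  rw [ae_restrict_iff' measurableSet_Ioi]
  apply ae_of_all
  intro x hx
  have hx14 : (14:ℝ) < x := hx
  rw [Real.norm_eq_abs, abs_of_nonneg (ff_nonneg (by linarith))]
  exact ff_tail_upper hx

lemma integrableOn_ff : IntegrableOn ff (Set.Ioi 0) volume := by
  have := integrableOn_ff_Ioc.union integrableOn_ff_Ioi14
  rwa [Set.Ioc_union_Ioi_eq_Ioi (by norm_num : (0:ℝ) ≤ 14)] at this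

lemma tail_upper : ∫ x in Set.Ioi (14:ℝ), ff x ≤ 15/224 := by
  have h := setIntegral_mono_on (integrableOn_ff_Ioi14)
    (integrableOn_inv_sq.const_mul (225/224 : ℝ)) measurableSet_Ioi
    (fun x hx => ff_tail_upper hx)
  rw [MeasureTheory.integral_const_mul, integral_inv_sq] at h
  linarith

lemma tail_lower : (16383 : ℝ)/245760 ≤ ∫ x in Set.Ioi (14:ℝ), ff x := by
  have h := setIntegral_mono_on (integrableOn_inv_sq.const_mul (16383/16384 : ℝ))
    (integrableOn_ff_Ioi14) measurableSet_Ioi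
    (fun x hx => ff_tail_lower hx)
  rw [MeasureTheory.integral_const_mul, integral_inv_sq] at h
  linarith

lemma integrableOn_glow : IntegrableOn glow (Set.Ioc 0 14) volume :=
  (contOn_glow.integrableOn_compact isCompact_Icc).mono_set Set.Ioc_subset_Icc_self

lemma integrableOn_gup : IntegrableOn gup (Set.Ioc 0 14) volume :=
  (contOn_gup.integrableOn_compact isCompact_Icc).mono_set Set.Ioc_subset_Icc_self

lemma main_lower : (-199044610335758423867261842319937988655917/33762553941212214246074426915466281250000 : ℝ) + (5630498427552475077878024974/587514894257475002803359375 : ℝ) * Real.log 2 ≤ ∫ x in Set.Ioc (0:ℝ) 14, ff x := by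
  have hval : (∫ x in Set.Ioc (0:ℝ) 14, glow x) = (-199044610335758423867261842319937988655917/33762553941212214246074426915466281250000 : ℝ) + (5630498427552475077878024974/587514894257475002803359375 : ℝ) * Real.log 2 := by
    rw [← intervalIntegral.integral_of_le (by norm_num : (0:ℝ) ≤ 14), int_glow, sum_lower_val]
  have h := setIntegral_mono_on integrableOn_glow integrableOn_ff_Ioc measurableSet_Ioc
    (fun x hx => ptwise_lower hx.1)
  rw [hval] at h
  exact h

lemma main_upper : (∫ x in Set.Ioc (0:ℝ) 14, ff x) ≤ (-1607038941580124310145985967054501076180723/272697551063637115064447294317227656250000 : ℝ) + (7685630353609128481303504089514/801957830661453378826585546875 : ℝ) * Real.log 2 := by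
  have hval : (∫ x in Set.Ioc (0:ℝ) 14, gup x) = (-1607038941580124310145985967054501076180723/272697551063637115064447294317227656250000 : ℝ) + (7685630353609128481303504089514/801957830661453378826585546875 : ℝ) * Real.log 2 := by
    rw [← intervalIntegral.integral_of_le (by norm_num : (0:ℝ) ≤ 14), int_gup, sum_upper_val]
  have h := setIntegral_mono_on integrableOn_ff_Ioc integrableOn_gup measurableSet_Ioc
    (fun x hx => ptwise_upper hx.1)
  rw [hval] at h
  exact h

lemma split_integral : ∫ x in Set.Ioi (0:ℝ), ff x
    = (∫ x in Set.Ioc (0:ℝ) 14, ff x) + ∫ x in Set.Ioi (14:ℝ), ff x := by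
  rw [← setIntegral_union (Set.Ioc_disjoint_Ioi le_rfl) measurableSet_Ioi
    integrableOn_ff_Ioc integrableOn_ff_Ioi14,
    Set.Ioc_union_Ioi_eq_Ioi (by norm_num : (0:ℝ) ≤ 14)]

theorem root_edge_asymptotic_constant :
    IntegrableOn (fun x : ℝ => (1 - Real.exp (-x)) / (x * (2 + x))) (Set.Ioi 0) volume ∧
    0.81 < (∫ x in Set.Ioi (0 : ℝ), (1 - Real.exp (-x)) / (x * (2 + x))) ∧
    (∫ x in Set.Ioi (0 : ℝ), (1 - Real.exp (-x)) / (x * (2 + x))) < 0.82 := by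
  refine ⟨integrableOn_ff, ?_, ?_⟩
  · have h := split_integral
    have hl := main_lower
    have ht := tail_lower
    have hlog := Real.log_two_gt_d9
    have hlog2 := Real.log_two_lt_d9
    show (0.81 : ℝ) < ∫ x in Set.Ioi (0:ℝ), ff x
    rw [h]
    nlinarith [hl, ht, hlog, hlog2]
  · have h := split_integral
    have hu := main_upper
    have ht := tail_upper
    have hlog := Real.log_two_gt_d9
    have hlog2 := Real.log_two_lt_d9
    show (∫ x in Set.Ioi (0:ℝ), ff x) < (0.82 : ℝ)
    rw [h]
    nlinarith [hu, ht, hlog, hlog2]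
end
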